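/- arXiv:1911.00929 — 2 statements merged into one kernel-verified Lean document; each statement's English description precedes it below -/
import Mathlib

section
/- Let p be a prime and let S be a nontrivial finite set of words over {0, …, p−1} containing the empty word, closed under prefixes, and such that every non-leaf node of S splits completely. For n ≥ 1 let Lₙ(S) = {ℓ₁ ++ ⋯ ++ ℓₙ : ℓ₁, …, ℓₙ ∈ L(S)} be the set of concatenations of n leaves of S. Then for every n ≥ 1, the p-adic balls {B_w : w ∈ Lₙ(S)} form a partition of ℤ_p, and the number of elements of Lₙ(S) equals (#L(S))ⁿ. -/
/-! A point of `B_{v ++ w}` is `ν(v) + p^|v| y` with `y ∈ B_w`. Comparing first digits mod `p`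
and cancelling `p` therefore shows that two balls meet only when one word is a prefix of the
other. The leaves of a prefix-closed tree form a prefix-free set, and so do the concatenations of
`n` leaves; hence the balls of `Lₙ(S)` are pairwise disjoint and concatenation is injective on
`n`-tuples of leaves, which gives the count. For the covering, a longest node of the finite tree
whose ball contains `x` is a leaf, since a completely split node has a child whose ball contains
`x`; induction on `n` then covers `ℤ_p`. -/

/-- `ν(w) = Σ_{k<n} a_k p^k` for a word `w = [a₀, …, a_{n-1}]` over `{0, …, p-1}`. -/
def wordVal (p : ℕ) (w : List (Fin p)) : ℕ :=
  w.foldr (fun a acc => a.val + p * acc) 0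

/-- The `p`-adic ball `B_w = {x ∈ ℤ_p : ‖x − ν(w)‖ ≤ p^{−n}}` associated to a word `w`
of length `n`. -/
def padicBall (p : ℕ) [Fact p.Prime] (w : List (Fin p)) : Set ℤ_[p] :=
  {x : ℤ_[p] | ‖x - (wordVal p w : ℤ_[p])‖ ≤ (p : ℝ) ^ (-(w.length : ℤ))}

/-- The leaves of a set `S` of words: elements of `S` none of whose children lies
in `S`. -/
def leaves (p : ℕ) (S : Set (List (Fin p))) : Set (List (Fin p)) :=
  {s ∈ S | ∀ c : Fin p, s ++ [c] ∉ S}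

/-- The balls indexed by the words of `W` form a partition of `ℤ_p`: they are nonempty,
pairwise disjoint and cover `ℤ_p`. -/
def IsBallPartition (p : ℕ) [Fact p.Prime] (W : Set (List (Fin p))) : Prop :=
  (∀ w ∈ W, (padicBall p w).Nonempty) ∧
  (∀ v ∈ W, ∀ w ∈ W, v ≠ w → Disjoint (padicBall p v) (padicBall p w)) ∧
  (⋃ w ∈ W, padicBall p w) = Set.univ

/-- `Lₙ(S)`: the set of concatenations of `n` leaves of `S`. -/
def leafPower (p : ℕ) (S : Set (List (Fin p))) (n : ℕ) : Set (List (Fin p)) :=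
  {w | ∃ l : List (List (Fin p)),
    l.length = n ∧ (∀ x ∈ l, x ∈ leaves p S) ∧ w = l.flatten}

open List

section PrefixFree
variable {α : Type*}

def IsPrefixFree (W : Set (List α)) : Prop :=
  ∀ v ∈ W, ∀ w ∈ W, v <+: w → v = w

theorem IsPrefixFree.eq_of_flatten_prefix {W : Set (List α)} (hW : IsPrefixFree W) :
    ∀ {l m : List (List α)}, l.length = m.length →
      (∀ x ∈ l, x ∈ W) → (∀ x ∈ m, x ∈ W) →
      l.flatten <+: m.flatten → l = m
  | [], [], _, _, _, _ => rfl
  | [], _ :: _, hlen, _, _, _ | _ :: _, [], hlen, _, _, _ => by simp at hlen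
  | a :: l, b :: m, hlen, hl, hm, h => by
    have ha := hl a mem_cons_self
    have hb := hm b mem_cons_self
    obtain rfl : a = b := by
      rcases prefix_or_prefix_of_prefix ((prefix_append a _).trans h) (prefix_append b _) with
        hab | hba
      · exact hW a ha b hb hab
      · exact (hW b hb a ha hba).symm
    rw [flatten_cons, flatten_cons, prefix_append_right_inj] at h
    rw [hW.eq_of_flatten_prefix (by simpa using hlen) (fun x hx => hl x (mem_cons_of_mem a hx))
      (fun x hx => hm x (mem_cons_of_mem a hx)) h]

theorem ncard_setOf_length_eq_and_forall_mem (A : Set α) (n : ℕ) :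
    {l : List α | l.length = n ∧ ∀ x ∈ l, x ∈ A}.ncard = A.ncard ^ n := by
  have hofFn : {l : List α | l.length = n ∧ ∀ x ∈ l, x ∈ A} =
      List.ofFn '' Set.univ.pi fun _ : Fin n => A := by
    ext l
    constructor
    · rintro ⟨rfl, hl⟩
      exact ⟨l.get, fun i _ => hl _ (get_mem l i), ofFn_get l⟩
    · rintro ⟨f, hf, rfl⟩
      simpa [mem_ofFn'] using fun i => hf i (Set.mem_univ i)
  rw [hofFn, Set.ncard_image_of_injective _ ofFn_injective, Set.ncard_def,
    Set.encard_pi_eq_prod_encard, ENat.toNat_prod, Finset.prod_const, Finset.card_univ,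
    Fintype.card_fin, Set.ncard_def]

end PrefixFree

section Words
variable {p : ℕ}

theorem wordVal_append (v w : List (Fin p)) :
    wordVal p (v ++ w) = wordVal p v + p ^ v.length * wordVal p w := by
  induction v with
  | nil => simp [wordVal]
  | cons a v ih =>
    simp only [cons_append, wordVal, foldr_cons] at ih ⊢
    rw [ih, length_cons, pow_succ]
    ring

theorem isPrefixFree_leaves {S : Set (List (Fin p))}
    (hpref : ∀ v ∈ S, ∀ w : List (Fin p), w <+: v → w ∈ S) :
    IsPrefixFree (leaves p S) := by
  rintro v hv w hw ⟨_ | ⟨c, r⟩, rfl⟩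
  · exact (append_nil v).symm
  · exact absurd (hpref _ hw.1 _ ⟨r, by simp⟩) (hv.2 c)

theorem leafPower_eq_image (S : Set (List (Fin p))) (n : ℕ) :
    leafPower p S n = flatten '' {l | l.length = n ∧ ∀ x ∈ l, x ∈ leaves p S} := by
  ext w
  simp only [leafPower, Set.mem_ofPred_eq, Set.mem_image, and_assoc, eq_comm]

theorem isPrefixFree_leafPower {S : Set (List (Fin p))}
    (hpref : ∀ v ∈ S, ∀ w : List (Fin p), w <+: v → w ∈ S) (n : ℕ) :
    IsPrefixFree (leafPower p S n) := by
  rintro _ ⟨l, hl, hlS, rfl⟩ _ ⟨m, hm, hmS, rfl⟩ h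
  rw [(isPrefixFree_leaves hpref).eq_of_flatten_prefix (hl.trans hm.symm) hlS hmS h]

end Words

section Balls
variable {p : ℕ} [Fact p.Prime]

theorem mem_padicBall_iff_dvd {w : List (Fin p)} {x : ℤ_[p]} :
    x ∈ padicBall p w ↔ (p : ℤ_[p]) ^ w.length ∣ x - wordVal p w := by
  rw [padicBall, Set.mem_ofPred_eq, PadicInt.norm_le_pow_iff_mem_span_pow,
    Ideal.mem_span_singleton]

theorem wordVal_mem_padicBall (w : List (Fin p)) : (wordVal p w : ℤ_[p]) ∈ padicBall p w := by
  simp [mem_padicBall_iff_dvd]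

theorem padicBall_nil : padicBall p [] = Set.univ := by
  ext x
  simp [mem_padicBall_iff_dvd]

theorem mem_padicBall_append {v w : List (Fin p)} {x : ℤ_[p]} :
    x ∈ padicBall p (v ++ w) ↔
      ∃ y ∈ padicBall p w, x = wordVal p v + (p : ℤ_[p]) ^ v.length * y := by
  simp only [mem_padicBall_iff_dvd, length_append, wordVal_append, pow_add, Nat.cast_add,
    Nat.cast_mul, Nat.cast_pow]
  constructor
  · rintro ⟨z, hz⟩
    refine ⟨wordVal p w + p ^ w.length * z, ⟨z, by ring⟩, by linear_combination hz⟩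
  · rintro ⟨y, ⟨z, hz⟩, rfl⟩
    exact ⟨z, by linear_combination (p : ℤ_[p]) ^ v.length * hz⟩

theorem mem_padicBall_iff_exists {w : List (Fin p)} {x : ℤ_[p]} :
    x ∈ padicBall p w ↔ ∃ y, x = wordVal p w + (p : ℤ_[p]) ^ w.length * y := by
  simpa [padicBall_nil] using mem_padicBall_append (v := w) (w := []) (x := x)

theorem mem_padicBall_cons {a : Fin p} {w : List (Fin p)} {x : ℤ_[p]} :
    x ∈ padicBall p (a :: w) ↔ ∃ y ∈ padicBall p w, x = a.val + p * y := by
  simpa [wordVal] using mem_padicBall_append (v := [a]) (w := w) (x := x)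

theorem eq_and_eq_of_natCast_add_mul_eq {a b : Fin p} {y z : ℤ_[p]}
    (h : (a.val : ℤ_[p]) + p * y = b.val + p * z) : a = b ∧ y = z := by
  have hab : a = b := by
    have := congrArg PadicInt.toZMod h
    simp only [map_add, map_mul, map_natCast, ZMod.natCast_self, zero_mul, add_zero,
      ZMod.natCast_eq_natCast_iff', Nat.mod_eq_of_lt a.isLt, Nat.mod_eq_of_lt b.isLt] at this
    exact Fin.ext this
  subst hab
  have hp : (p : ℤ_[p]) ≠ 0 := Nat.cast_ne_zero.2 (Fact.out : p.Prime).ne_zero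
  exact ⟨rfl, mul_left_cancel₀ hp (add_left_cancel h)⟩

theorem prefix_of_mem_padicBall {v w : List (Fin p)} {x : ℤ_[p]} (hlen : v.length ≤ w.length)
    (hv : x ∈ padicBall p v) (hw : x ∈ padicBall p w) : v <+: w := by
  induction v generalizing w x with
  | nil => exact nil_prefix
  | cons a v ih =>
    obtain _ | ⟨b, w⟩ := w
    · simp at hlen
    obtain ⟨y, hy, rfl⟩ := mem_padicBall_cons.1 hv
    obtain ⟨z, hz, hyz⟩ := mem_padicBall_cons.1 hw
    obtain ⟨rfl, rfl⟩ := eq_and_eq_of_natCast_add_mul_eq hyz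
    exact (prefix_cons_inj a).2 (ih (by simpa using hlen) hy hz)

theorem IsPrefixFree.disjoint_padicBall {W : Set (List (Fin p))} (hW : IsPrefixFree W)
    {v w : List (Fin p)} (hv : v ∈ W) (hw : w ∈ W) (hne : v ≠ w) :
    Disjoint (padicBall p v) (padicBall p w) := by
  refine Set.disjoint_left.2 fun x hxv hxw => hne ?_
  rcases le_total v.length w.length with hle | hle
  · exact hW v hv w hw (prefix_of_mem_padicBall hle hxv hxw)
  · exact (hW w hw v hv (prefix_of_mem_padicBall hle hxw hxv)).symm

theorem exists_mem_padicBall_append_singleton {w : List (Fin p)} {x : ℤ_[p]}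
    (hx : x ∈ padicBall p w) : ∃ c : Fin p, x ∈ padicBall p (w ++ [c]) := by
  obtain ⟨y, rfl⟩ := mem_padicBall_iff_exists.1 hx
  obtain ⟨c, hc, hyc⟩ := PadicInt.exists_mem_range y
  rw [PadicInt.maximalIdeal_eq_span_p, Ideal.mem_span_singleton] at hyc
  have hy : y ∈ padicBall p [⟨c, hc⟩] := mem_padicBall_iff_dvd.2 (by simpa [wordVal])
  exact ⟨⟨c, hc⟩, mem_padicBall_append.2 ⟨y, hy, rfl⟩⟩

theorem exists_mem_leaves_mem_padicBall {S : Set (List (Fin p))} (hfin : S.Finite)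
    (hroot : [] ∈ S) (hsplit : ∀ s ∈ S \ leaves p S, ∀ c : Fin p, s ++ [c] ∈ S)
    (x : ℤ_[p]) :
    ∃ w ∈ leaves p S, x ∈ padicBall p w := by
  obtain ⟨w, ⟨hwS, hxw⟩, hmax⟩ :=
    (hfin.subset fun w (hw : w ∈ S ∧ x ∈ padicBall p w) => hw.1).exists_maximalFor length _
      ⟨[], hroot, by simp [padicBall_nil]⟩
  by_contra! hnot
  obtain ⟨c, hxc⟩ := exists_mem_padicBall_append_singleton hxw
  simpa using hmax ⟨hsplit w ⟨hwS, fun hw => hnot w hw hxw⟩ c, hxc⟩ (by simp)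

theorem exists_mem_leafPower_mem_padicBall {S : Set (List (Fin p))}
    (hcover : ∀ x : ℤ_[p], ∃ w ∈ leaves p S, x ∈ padicBall p w) (n : ℕ) (x : ℤ_[p]) :
    ∃ w ∈ leafPower p S n, x ∈ padicBall p w := by
  induction n generalizing x with
  | zero => exact ⟨[], ⟨[], rfl, by simp, rfl⟩, by simp [padicBall_nil]⟩
  | succ n ih =>
    obtain ⟨a, ha, hxa⟩ := hcover x
    obtain ⟨y, rfl⟩ := mem_padicBall_iff_exists.1 hxa
    obtain ⟨_, ⟨l, hl, hlS, rfl⟩, hy⟩ := ih y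
    exact ⟨(a :: l).flatten, ⟨a :: l, by simp [hl], forall_mem_cons.2 ⟨ha, hlS⟩, rfl⟩,
      mem_padicBall_append.2 ⟨y, hy, rfl⟩⟩

end Balls

theorem leafPower_partition_and_card_general (p : ℕ) [Fact p.Prime]
    (S : Set (List (Fin p))) (hfin : S.Finite) (hroot : ([] : List (Fin p)) ∈ S)
    (hpref : ∀ v ∈ S, ∀ w : List (Fin p), w <+: v → w ∈ S)
    (hsplit : ∀ s ∈ S \ leaves p S, ∀ c : Fin p, s ++ [c] ∈ S) :
    ∀ n : ℕ, 1 ≤ n →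
      IsBallPartition p (leafPower p S n) ∧
      (leafPower p S n).ncard = (leaves p S).ncard ^ n := by
  intro n _
  have hcover := exists_mem_leafPower_mem_padicBall
    (exists_mem_leaves_mem_padicBall hfin hroot hsplit) n
  have hinj : Set.InjOn flatten {l | l.length = n ∧ ∀ x ∈ l, x ∈ leaves p S} :=
    fun l hl m hm h =>
      (isPrefixFree_leaves hpref).eq_of_flatten_prefix (hl.1.trans hm.1.symm) hl.2 hm.2 (h ▸ prefix_rfl)
  refine ⟨⟨fun w _ => ⟨_, wordVal_mem_padicBall w⟩,
    fun v hv w hw => (isPrefixFree_leafPower hpref n).disjoint_padicBall hv hw,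
    Set.iUnion₂_eq_univ_iff.2 fun x => by simpa only [exists_prop] using hcover x⟩, ?_⟩
  rw [leafPower_eq_image, hinj.ncard_image, ncard_setOf_length_eq_and_forall_mem]

/-- If `S` is a nontrivial finite prefix-closed set of words containing the empty word in
which every non-leaf node splits completely, then for every `n ≥ 1` the balls indexed by
`Lₙ(S)` partition `ℤ_p`, and `#Lₙ(S) = (#L(S))ⁿ`. -/
theorem leafPower_partition_and_card (p : ℕ) [Fact p.Prime]
    (S : Set (List (Fin p))) (hfin : S.Finite) (hroot : ([] : List (Fin p)) ∈ S)
    (hpref : ∀ v ∈ S, ∀ w : List (Fin p), w <+: v → w ∈ S)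
    (hnontriv : ∃ w ∈ S, w ≠ [])
    (hsplit : ∀ s ∈ S \ leaves p S, ∀ c : Fin p, s ++ [c] ∈ S) :
    ∀ n : ℕ, 1 ≤ n →
      IsBallPartition p (leafPower p S n) ∧
      (leafPower p S n).ncard = (leaves p S).ncard ^ n :=
  leafPower_partition_and_card_general p S hfin hroot hpref hsplit
end

section
/- Let p and q be primes, let S be a nontrivial finite set of words over {0, …, p−1} containing the empty word, closed under prefixes, and with every non-leaf node splitting completely, and let S' be such a set of words over {0, …, q−1}, with #L(S) = #L(S'). Then for any bijection τ : L(S) → L(S') there exists a homeomorphism φ : ℤ_p → ℤ_q such that for every n ≥ 1 and all leaves ℓ₁, …, ℓₙ ∈ L(S), φ maps the p-adic ball B_{ℓ₁ ++ ⋯ ++ ℓₙ} ⊆ ℤ_p onto the q-adic ball B_{τ(ℓ₁) ++ ⋯ ++ τ(ℓₙ)} ⊆ ℤ_q. -/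
/-!
The leaves of a tile form a finite complete prefix code: every infinite word over
`{0, …, p-1}` factors uniquely as an infinite concatenation of leaves, found by repeatedly
cutting off the unique leaf that is a prefix of what remains. Concatenation is therefore a
continuous bijection between compact Hausdorff spaces, hence a homeomorphism, from sequences
of leaves to sequences of digits, and the digit expansion `d ↦ ∑ dₖ pᵏ` is a homeomorphism
from sequences of digits onto `ℤ_p` taking the cylinder of `w` onto `B_w`. Under the
composite, sequences starting with `ℓ₁, …, ℓₙ` correspond to `B_{ℓ₁ ++ ⋯ ++ ℓₙ}`, so applying
`τ` letterwise to sequences of leaves and transporting to `ℤ_p`, `ℤ_q` gives `φ`.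
-/

theorem Stream'.take_eq_take_of_get_eq {β : Type*} {a b : Stream' β} {n : ℕ}
    (h : ∀ i < n, a.get i = b.get i) : a.take n = b.take n :=
  List.ext_getElem (by simp only [Stream'.length_take]) fun i hi _ => by
    simp only [Stream'.take_get]
    exact h i (by simpa only [Stream'.length_take] using hi)

theorem Stream'.take_map_eq_iff {β γ : Type*} (e : β ≃ γ) (a : Stream' β) (l : List γ) :
    (a.map e).take l.length = l ↔ a.take (l.map e.symm).length = l.map e.symm := by
  rw [← Stream'.map_take, List.length_map, ← (List.map_injective_iff.2 e.symm.injective).eq_iff,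
    List.map_map, e.symm_comp_self, List.map_id]

section WordVal

variable {p : ℕ}

theorem wordVal_eq_ofDigits (w : List (Fin p)) : wordVal p w = Nat.ofDigits p (w.map Fin.val) := by
  induction w with
  | nil => rfl
  | cons a w ih => simp [wordVal, Nat.ofDigits_cons, ← ih]

theorem wordVal_lt (hp : 1 < p) (w : List (Fin p)) : wordVal p w < p ^ w.length := by
  rw [wordVal_eq_ofDigits, ← List.length_map (f := Fin.val)]
  exact Nat.ofDigits_lt_base_pow_length hp (by simp)

theorem eq_of_wordVal_modEq (hp : 1 < p) {u w : List (Fin p)} (hl : u.length = w.length)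
    (h : wordVal p u ≡ wordVal p w [MOD p ^ w.length]) : u = w := by
  have hval := h.eq_of_lt_of_lt (hl ▸ wordVal_lt hp u) (wordVal_lt hp w)
  rw [wordVal_eq_ofDigits, wordVal_eq_ofDigits] at hval
  exact List.map_injective_iff.2 Fin.val_injective <|
    Nat.ofDigits_inj_of_len_eq hp (by simpa) (by simp) (by simp) hval

theorem exists_wordVal_eq (hp : 1 < p) (n : ℕ) : ∃ w : List (Fin p), wordVal p w = n := by
  induction n using Nat.strong_induction_on with
  | _ n ih =>
    rcases n.eq_zero_or_pos with rfl | hn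
    · exact ⟨[], rfl⟩
    · obtain ⟨w, hw⟩ := ih (n / p) (Nat.div_lt_self hn hp)
      refine ⟨⟨n % p, Nat.mod_lt _ (zero_lt_one.trans hp)⟩ :: w, ?_⟩
      change n % p + p * wordVal p w = n
      rw [hw, Nat.mod_add_div]

end WordVal

namespace PadicInt

variable {p : ℕ} [hp : Fact p.Prime]

theorem norm_wordVal_sub_le_iff {u w : List (Fin p)} (hl : u.length = w.length) :
    ‖(wordVal p u : ℤ_[p]) - wordVal p w‖ ≤ (p : ℝ) ^ (-(w.length : ℤ)) ↔ u = w := by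
  have hcast : (wordVal p u : ℤ_[p]) - wordVal p w = ((wordVal p u - wordVal p w : ℤ) : ℤ_[p]) := by
    push_cast; ring
  rw [hcast, norm_int_le_pow_iff_dvd, ← Int.modEq_iff_dvd]
  norm_cast
  exact ⟨fun h => eq_of_wordVal_modEq hp.out.one_lt hl h.symm, fun h => h ▸ rfl⟩

theorem norm_add_pow_mul_le_iff (x y : ℤ_[p]) (n : ℕ) :
    ‖x + p ^ n * y‖ ≤ (p : ℝ) ^ (-n : ℤ) ↔ ‖x‖ ≤ (p : ℝ) ^ (-n : ℤ) := by
  simp only [norm_le_pow_iff_mem_span_pow]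
  exact Ideal.add_mem_iff_left _ (Ideal.mul_mem_right _ _ (Ideal.mem_span_singleton_self _))

noncomputable def ofDigits (d : Stream' (Fin p)) : ℤ_[p] :=
  ∑' k, ((d.get k : ℕ) : ℤ_[p]) * (p : ℤ_[p]) ^ k

theorem norm_digit_mul_pow_le (a : Fin p) (k : ℕ) :
    ‖((a : ℕ) : ℤ_[p]) * (p : ℤ_[p]) ^ k‖ ≤ (p : ℝ)⁻¹ ^ k := by
  rw [norm_mul, norm_p_pow, zpow_neg, zpow_natCast, inv_pow]
  exact mul_le_of_le_one_left (by positivity) (norm_le_one _)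

theorem summable_geometric_inv_prime : Summable fun k : ℕ => (p : ℝ)⁻¹ ^ k :=
  summable_geometric_of_lt_one (by positivity)
    (inv_lt_one_of_one_lt₀ (by exact_mod_cast hp.out.one_lt))

theorem summable_digits (d : Stream' (Fin p)) :
    Summable fun k => ((d.get k : ℕ) : ℤ_[p]) * (p : ℤ_[p]) ^ k :=
  .of_norm_bounded summable_geometric_inv_prime fun k => norm_digit_mul_pow_le _ k

theorem ofDigits_cons (a : Fin p) (d : Stream' (Fin p)) :
    ofDigits (Stream'.cons a d) = ((a : ℕ) : ℤ_[p]) + p * ofDigits d := by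
  rw [ofDigits, (summable_digits _).tsum_eq_zero_add, ofDigits, ← (summable_digits d).tsum_mul_left]
  simp only [Stream'.get_zero_cons, Stream'.get_succ_cons, pow_zero, mul_one, pow_succ]
  congr 2; ext k; ring

theorem ofDigits_appendStream (w : List (Fin p)) (d : Stream' (Fin p)) :
    ofDigits (w ++ₛ d) = wordVal p w + p ^ w.length * ofDigits d := by
  induction w with
  | nil => simp [wordVal]
  | cons a w ih =>
    rw [Stream'.cons_append_stream, ofDigits_cons, ih]
    simp only [wordVal, List.foldr_cons, List.length_cons]
    push_cast; ring

theorem ofDigits_mem_padicBall_iff (d : Stream' (Fin p)) (w : List (Fin p)) :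
    ofDigits d ∈ padicBall p w ↔ d.take w.length = w := by
  have hsplit : ofDigits d - wordVal p w
      = ((wordVal p (d.take w.length) : ℤ_[p]) - wordVal p w)
        + p ^ w.length * ofDigits (d.drop w.length) := by
    conv_lhs => rw [← Stream'.append_take_drop w.length d]
    rw [ofDigits_appendStream, Stream'.length_take]; ring
  rw [padicBall, Set.mem_ofPred_eq, hsplit, norm_add_pow_mul_le_iff,
    norm_wordVal_sub_le_iff (Stream'.length_take _ _)]

theorem ofDigits_injective : Function.Injective (ofDigits (p := p)) := fun d e h =>
  Stream'.take_theorem _ _ fun n => by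
    have he := (ofDigits_mem_padicBall_iff e (d.take n)).1
      (h ▸ (ofDigits_mem_padicBall_iff d _).2 (by rw [Stream'.length_take]))
    rwa [Stream'.length_take, eq_comm] at he

-- `Stream' α` is `ℕ → α` without the product topology, so continuity is stated on `ℕ → α`.
theorem continuous_ofDigits : Continuous fun d : ℕ → Fin p => ofDigits d :=
  continuous_tsum
    (fun k => (continuous_of_discreteTopology
      (f := fun a : Fin p => ((a : ℕ) : ℤ_[p]) * p ^ k)).comp (continuous_apply k))
    summable_geometric_inv_prime fun k d => norm_digit_mul_pow_le (d k) k

theorem ofDigits_surjective : Function.Surjective (ofDigits (p := p)) := by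
  have hnat : Set.range ((↑) : ℕ → ℤ_[p]) ⊆ Set.range ofDigits := by
    rintro _ ⟨n, rfl⟩
    obtain ⟨w, rfl⟩ := exists_wordVal_eq hp.out.one_lt n
    refine ⟨w ++ₛ Stream'.const 0, ?_⟩
    rw [ofDigits_appendStream]
    simp [ofDigits, Stream'.get_const]
  refine Set.range_eq_univ.1 (Set.eq_univ_of_univ_subset ?_)
  rw [← denseRange_natCast.closure_range]
  exact closure_minimal hnat (isCompact_range continuous_ofDigits).isClosed

noncomputable def ofDigitsHomeomorph : (ℕ → Fin p) ≃ₜ ℤ_[p] :=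
  continuous_ofDigits.homeoOfEquivCompactToT2
    (f := Equiv.ofBijective (fun d : ℕ → Fin p => ofDigits d)
      ⟨ofDigits_injective, ofDigits_surjective⟩)

end PadicInt

structure IsCompletePrefixCode {α : Type*} (C : Set (List α)) : Prop where
  nil_notMem : [] ∉ C
  eq_of_prefix : ∀ ⦃u⦄, u ∈ C → ∀ ⦃v⦄, v ∈ C → u <+: v → u = v
  exists_take_mem : ∀ d : Stream' α, ∃ w ∈ C, d.take w.length = w

namespace IsCompletePrefixCode

variable {α : Type*} {C : Set (List α)} (hC : IsCompletePrefixCode C)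
include hC

theorem length_le_length_flatten (l : List C) : l.length ≤ (l.map Subtype.val).flatten.length := by
  induction l with
  | nil => simp
  | cons w l ih =>
    have hw : 0 < w.1.length := List.length_pos_iff.2 (ne_of_mem_of_not_mem w.2 hC.nil_notMem)
    simp only [List.map_cons, List.flatten_cons, List.length_append, List.length_cons]
    omega

noncomputable def firstWord (d : Stream' α) : C :=
  ⟨(hC.exists_take_mem d).choose, (hC.exists_take_mem d).choose_spec.1⟩

theorem firstWord_eq_iff (d : Stream' α) (w : C) :
    hC.firstWord d = w ↔ d.take w.1.length = w.1 := by
  have hfirst : d.take (hC.firstWord d).1.length = (hC.firstWord d).1 :=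
    (hC.exists_take_mem d).choose_spec.2
  refine ⟨fun h => h ▸ hfirst, fun hw => Subtype.ext ?_⟩
  rcases le_total (hC.firstWord d).1.length w.1.length with hle | hle
  · refine hC.eq_of_prefix (hC.firstWord d).2 w.2 ?_
    rw [← hfirst, ← hw]
    exact Stream'.take_prefix_take_left _ _ _ hle
  · refine (hC.eq_of_prefix w.2 (hC.firstWord d).2 ?_).symm
    rw [← hfirst, ← hw]
    exact Stream'.take_prefix_take_left _ _ _ hle

noncomputable def decode : Stream' α → Stream' C :=
  Stream'.corec hC.firstWord fun d => d.drop (hC.firstWord d).1.length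

theorem take_decode_eq_iff (l : List C) (d : Stream' α) :
    (hC.decode d).take l.length = l ↔
      d.take (l.map Subtype.val).flatten.length = (l.map Subtype.val).flatten := by
  induction l generalizing d with
  | nil => simp
  | cons w l ih =>
    rw [decode, Stream'.corec_eq, ← decode, List.length_cons, Stream'.take_succ_cons,
      List.cons.injEq, firstWord_eq_iff]
    simp only [List.map_cons, List.flatten_cons, List.length_append, Stream'.take_add]
    constructor
    · rintro ⟨hw, hl⟩
      rw [(hC.firstWord_eq_iff d w).2 hw, ih] at hl
      rw [hw, hl]
    · intro h
      obtain ⟨hw, hl⟩ := List.append_inj h (Stream'.length_take _ _)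
      rw [(hC.firstWord_eq_iff d w).2 hw, ih]
      exact ⟨hw, hl⟩

def concat (a : Stream' C) : Stream' α := fun k =>
  ((a.take (k + 1)).map Subtype.val).flatten[k]'(by
    have := hC.length_le_length_flatten (a.take (k + 1))
    rw [Stream'.length_take] at this
    omega)

theorem take_concat (a : Stream' C) (n : ℕ) :
    (hC.concat a).take ((a.take n).map Subtype.val).flatten.length =
      ((a.take n).map Subtype.val).flatten := by
  have hprefix {m n : ℕ} (h : m ≤ n) :
      ((a.take m).map Subtype.val).flatten <+: ((a.take n).map Subtype.val).flatten :=
    ((Stream'.take_prefix_take_left _ _ _ h).map _).flatten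
  refine List.ext_getElem (Stream'.length_take _ _) fun k _ hk => ?_
  rw [Stream'.take_get]
  rcases le_total (k + 1) n with h | h
  · exact (hprefix h).getElem _
  · exact ((hprefix h).getElem hk).symm

theorem decode_concat (a : Stream' C) : hC.decode (hC.concat a) = a :=
  Stream'.take_theorem _ _ fun n => by
    simpa [Stream'.length_take] using
      (hC.take_decode_eq_iff (a.take n) (hC.concat a)).2 (hC.take_concat a n)

theorem decode_injective : Function.Injective hC.decode := fun d e h =>
  Stream'.take_theorem _ _ fun n => by
    have hd := (hC.take_decode_eq_iff ((hC.decode d).take n) d).1 (by rw [Stream'.length_take])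
    have he := (hC.take_decode_eq_iff ((hC.decode d).take n) e).1
      (by rw [Stream'.length_take, h])
    have hn := hC.length_le_length_flatten ((hC.decode d).take n)
    rw [Stream'.length_take] at hn
    rw [← min_eq_right hn, ← Stream'.take_take, ← Stream'.take_take, hd, he]

theorem take_concat_eq_iff (a : Stream' C) (l : List C) :
    (hC.concat a).take (l.map Subtype.val).flatten.length = (l.map Subtype.val).flatten ↔
      a.take l.length = l := by
  rw [← hC.take_decode_eq_iff, hC.decode_concat]

theorem concat_eq_of_take_eq {a b : Stream' C} {k : ℕ} (h : a.take (k + 1) = b.take (k + 1)) :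
    hC.concat a k = hC.concat b k := by
  simp only [concat, h]

theorem continuous_concat [TopologicalSpace α] [DiscreteTopology α] :
    Continuous fun (a : ℕ → C) k => hC.concat a k := by
  refine continuous_pi fun k => continuous_iff_continuousAt.2 fun a =>
    tendsto_const_nhds.congr' <| Filter.mem_of_superset
      ((PiNat.isOpen_cylinder _ a (k + 1)).mem_nhds (PiNat.self_mem_cylinder a (k + 1)))
      fun b hb => ?_
  exact hC.concat_eq_of_take_eq (Stream'.take_eq_take_of_get_eq fun i hi => (hb i hi).symm)

noncomputable def concatHomeomorph [TopologicalSpace α] [DiscreteTopology α] [Finite C] :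
    (ℕ → C) ≃ₜ (ℕ → α) :=
  hC.continuous_concat.homeoOfEquivCompactToT2 (f :=
    ({ toFun a k := hC.concat a k
       invFun := hC.decode
       left_inv := hC.decode_concat
       right_inv := Function.LeftInverse.rightInverse_of_injective hC.decode_concat
         hC.decode_injective } : (ℕ → C) ≃ (ℕ → α)))

end IsCompletePrefixCode

theorem IsCompletePrefixCode.exists_homeomorph_padicInt {p : ℕ} [Fact p.Prime]
    {C : Set (List (Fin p))} (hC : IsCompletePrefixCode C) [Finite C] :
    ∃ E : ℤ_[p] ≃ₜ (ℕ → C), ∀ (x : ℤ_[p]) (l : List C),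
      x ∈ padicBall p (l.map Subtype.val).flatten ↔ Stream'.take l.length (E x) = l := by
  refine ⟨(hC.concatHomeomorph.trans PadicInt.ofDigitsHomeomorph).symm, fun x l => ?_⟩
  conv_lhs => rw [← (hC.concatHomeomorph.trans PadicInt.ofDigitsHomeomorph).apply_symm_apply x]
  exact (PadicInt.ofDigits_mem_padicBall_iff _ _).trans (hC.take_concat_eq_iff _ l)

section Tile

variable {p : ℕ} {S : Set (List (Fin p))}

theorem nil_notMem_leaves (hpref : ∀ v ∈ S, ∀ w : List (Fin p), w <+: v → w ∈ S)
    (hnontriv : ∃ w ∈ S, w ≠ []) : [] ∉ leaves p S := by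
  rintro ⟨-, hleaf⟩
  obtain ⟨_ | ⟨c, w⟩, hw, hne⟩ := hnontriv
  · exact hne rfl
  · exact hleaf c (hpref _ hw [c] ⟨w, rfl⟩)

theorem eq_of_mem_leaves_of_prefix (hpref : ∀ v ∈ S, ∀ w : List (Fin p), w <+: v → w ∈ S)
    {u v : List (Fin p)} (hu : u ∈ leaves p S) (hv : v ∈ S) (h : u <+: v) : u = v := by
  obtain ⟨_ | ⟨c, t⟩, rfl⟩ := h
  · exact (List.append_nil u).symm
  · exact absurd (hpref _ hv (u ++ [c]) ⟨t, by simp⟩) (hu.2 c)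

theorem exists_mem_leaves_take_eq (hfin : S.Finite) (hroot : [] ∈ S)
    (hsplit : ∀ s ∈ S \ leaves p S, ∀ c : Fin p, s ++ [c] ∈ S) (d : Stream' (Fin p)) :
    ∃ w ∈ leaves p S, d.take w.length = w := by
  have hfinite : {n | d.take n ∈ S}.Finite :=
    hfin.preimage fun m _ n _ h => by simpa [Stream'.length_take] using congrArg List.length h
  obtain ⟨n, hn, hmax⟩ := hfinite.exists_maximal ⟨0, hroot⟩
  refine ⟨d.take n, ⟨hn, fun c hc => ?_⟩, by rw [Stream'.length_take]⟩
  have hsucc : d.take (n + 1) ∈ S := by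
    rw [← Stream'.concat_take_get]
    exact hsplit _ ⟨hn, fun hleaf => hleaf.2 c hc⟩ _
  exact absurd (hmax hsucc (Nat.le_succ n)) (by omega)

theorem isCompletePrefixCode_leaves (hfin : S.Finite) (hroot : [] ∈ S)
    (hpref : ∀ v ∈ S, ∀ w : List (Fin p), w <+: v → w ∈ S) (hnontriv : ∃ w ∈ S, w ≠ [])
    (hsplit : ∀ s ∈ S \ leaves p S, ∀ c : Fin p, s ++ [c] ∈ S) :
    IsCompletePrefixCode (leaves p S) where
  nil_notMem := nil_notMem_leaves hpref hnontriv
  eq_of_prefix _ hu _ hv := eq_of_mem_leaves_of_prefix hpref hu hv.1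
  exists_take_mem := exists_mem_leaves_take_eq hfin hroot hsplit

end Tile

theorem homeomorph_padicInt_of_tiles_general (p q : ℕ) [Fact p.Prime] [Fact q.Prime]
    (S : Set (List (Fin p))) (S' : Set (List (Fin q)))
    (hfin : S.Finite) (hroot : ([] : List (Fin p)) ∈ S)
    (hpref : ∀ v ∈ S, ∀ w : List (Fin p), w <+: v → w ∈ S)
    (hnontriv : ∃ w ∈ S, w ≠ [])
    (hsplit : ∀ s ∈ S \ leaves p S, ∀ c : Fin p, s ++ [c] ∈ S)
    (hfin' : S'.Finite) (hroot' : ([] : List (Fin q)) ∈ S')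
    (hpref' : ∀ v ∈ S', ∀ w : List (Fin q), w <+: v → w ∈ S')
    (hnontriv' : ∃ w ∈ S', w ≠ [])
    (hsplit' : ∀ s ∈ S' \ leaves q S', ∀ c : Fin q, s ++ [c] ∈ S')
    (τ : ↥(leaves p S) ≃ ↥(leaves q S')) :
    ∃ φ : ℤ_[p] ≃ₜ ℤ_[q],
      ∀ l : List ↥(leaves p S), l ≠ [] →
        φ '' padicBall p (l.map Subtype.val).flatten =
          padicBall q (l.map fun x => ((τ x : ↥(leaves q S')) : List (Fin q))).flatten := by
  have : Finite (leaves p S) := hfin.subset fun _ h => h.1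
  have : Finite (leaves q S') := hfin'.subset fun _ h => h.1
  obtain ⟨E, hE⟩ :=
    (isCompletePrefixCode_leaves hfin hroot hpref hnontriv hsplit).exists_homeomorph_padicInt
  obtain ⟨E', hE'⟩ :=
    (isCompletePrefixCode_leaves hfin' hroot' hpref' hnontriv' hsplit').exists_homeomorph_padicInt
  let τs : (ℕ → leaves p S) ≃ₜ (ℕ → leaves q S') :=
    Homeomorph.piCongrRight fun _ => τ.toHomeomorphOfDiscrete
  refine ⟨E.trans (τs.trans E'.symm), fun l _ => Set.ext fun y => ?_⟩
  have hsymm : E ((E.trans (τs.trans E'.symm)).symm y) = fun n => τ.symm (E' y n) := by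
    simp only [Homeomorph.symm_trans_apply, Homeomorph.apply_symm_apply, Homeomorph.symm_symm]
    rfl
  rw [Homeomorph.image_eq_preimage_symm, Set.mem_preimage, hE, hsymm,
    show l.map (fun x => ((τ x : leaves q S') : List (Fin q))) = (l.map τ).map Subtype.val by simp,
    hE']
  exact Stream'.take_map_eq_iff τ.symm _ l

/-- Given tiles `S` of the `p`-ary tree and `S'` of the `q`-ary tree with equally many
leaves, any bijection `τ : L(S) → L(S')` induces a homeomorphism `φ : ℤ_p → ℤ_q` mapping,
for every `n ≥ 1` and all leaves `ℓ₁, …, ℓₙ ∈ L(S)`, the ball `B_{ℓ₁ ++ ⋯ ++ ℓₙ}` onto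
the ball `B_{τ(ℓ₁) ++ ⋯ ++ τ(ℓₙ)}`. -/
theorem homeomorph_padicInt_of_tiles (p q : ℕ) [Fact p.Prime] [Fact q.Prime]
    (S : Set (List (Fin p))) (S' : Set (List (Fin q)))
    (hfin : S.Finite) (hroot : ([] : List (Fin p)) ∈ S)
    (hpref : ∀ v ∈ S, ∀ w : List (Fin p), w <+: v → w ∈ S)
    (hnontriv : ∃ w ∈ S, w ≠ [])
    (hsplit : ∀ s ∈ S \ leaves p S, ∀ c : Fin p, s ++ [c] ∈ S)
    (hfin' : S'.Finite) (hroot' : ([] : List (Fin q)) ∈ S')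
    (hpref' : ∀ v ∈ S', ∀ w : List (Fin q), w <+: v → w ∈ S')
    (hnontriv' : ∃ w ∈ S', w ≠ [])
    (hsplit' : ∀ s ∈ S' \ leaves q S', ∀ c : Fin q, s ++ [c] ∈ S')
    (hcard : (leaves p S).ncard = (leaves q S').ncard)
    (τ : ↥(leaves p S) ≃ ↥(leaves q S')) :
    ∃ φ : ℤ_[p] ≃ₜ ℤ_[q],
      ∀ l : List ↥(leaves p S), l ≠ [] →
        φ '' padicBall p (l.map Subtype.val).flatten =
          padicBall q (l.map fun x => ((τ x : ↥(leaves q S')) : List (Fin q))).flatten :=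
  homeomorph_padicInt_of_tiles_general p q S S' hfin hroot hpref hnontriv hsplit hfin' hroot' hpref'
    hnontriv' hsplit' τ
end
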